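/- Let A' be a commutative ring, J' ⊆ A' an ideal, B' := A'/J' with quotient map g : A' → B', let f : B → B' be a homomorphism of commutative rings, and let A := B ×_{B'} A' be the fiber product ring. If the induced map Spec(B') → Spec(B) on prime spectra (pullback of primes along f) is surjective, then the induced map Spec(A') → Spec(A) (pullback of primes along the second projection pr₂ : A → A') is surjective. -/
import Mathlib


/-- The fiber product ring `B ×_{B'} A'` of two ring homomorphisms `f : B →+* B'` and
`g : A' →+* B'`, realized as the subring `{(b, a') | f b = g a'}` of `B × A'`. -/
def fiberProd {B A' B' : Type*} [CommRing B] [CommRing A'] [CommRing B']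
    (f : B →+* B') (g : A' →+* B') : Subring (B × A') :=
  RingHom.eqLocus (f.comp (RingHom.fst B A')) (g.comp (RingHom.snd B A'))

/-- The second projection `pr₂ : B ×_{B'} A' →+* A'`. -/
def fiberProdSnd {B A' B' : Type*} [CommRing B] [CommRing A'] [CommRing B']
    (f : B →+* B') (g : A' →+* B') : fiberProd f g →+* A' :=
  (RingHom.snd B A').comp (fiberProd f g).subtype

theorem stmt2 {B A' : Type*} [CommRing B] [CommRing A'] (J' : Ideal A')
    (f : B →+* A' ⧸ J')
    (hf : Function.Surjective (PrimeSpectrum.comap f)) :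
    Function.Surjective (PrimeSpectrum.comap (fiberProdSnd f (Ideal.Quotient.mk J'))) := by
  set g := Ideal.Quotient.mk J' with hg
  set pr₂ := fiberProdSnd f g with hpr2
  intro P
  have hmemK : ∀ j ∈ J', ((0 : B), j) ∈ fiberProd f g := by
    intro j hj
    show f 0 = g j
    simp [hg, Ideal.Quotient.eq_zero_iff_mem.2 hj]
  by_cases hK : ∀ j : A', ∀ hj : j ∈ J', (⟨((0 : B), j), hmemK j hj⟩ : fiberProd f g) ∈ P.asIdeal
  · -- Case: K = 0 × J' ⊆ P.
    set pr₁ : fiberProd f g →+* B := (RingHom.fst B A').comp (fiberProd f g).subtype with hpr1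
    have hsurj : Function.Surjective pr₁ := by
      intro b
      obtain ⟨a', ha'⟩ := Ideal.Quotient.mk_surjective (I := J') (f b)
      exact ⟨⟨(b, a'), ha'.symm⟩, rfl⟩
    have hker : RingHom.ker pr₁ ≤ P.asIdeal := by
      rintro ⟨⟨b, a'⟩, hx⟩ h
      have hb : b = 0 := h
      subst hb
      have ha' : a' ∈ J' := by
        rw [← Ideal.Quotient.eq_zero_iff_mem]
        have hx' : f 0 = g a' := hx
        show g a' = 0
        rw [← hx']
        simp
      exact hK a' ha'
    haveI hQp : (P.asIdeal.map pr₁).IsPrime :=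
      Ideal.map_isPrime_of_surjective hsurj hker
    obtain ⟨q', hq'⟩ := hf ⟨P.asIdeal.map pr₁, hQp⟩
    refine ⟨PrimeSpectrum.comap g q', ?_⟩
    ext x
    obtain ⟨⟨b, a'⟩, hx⟩ := x
    have hcomap : Ideal.comap f q'.asIdeal = P.asIdeal.map pr₁ := by
      have := congrArg PrimeSpectrum.asIdeal hq'
      simpa [PrimeSpectrum.comap_asIdeal] using this
    have hb : f b ∈ q'.asIdeal ↔ b ∈ P.asIdeal.map pr₁ := by
      rw [← hcomap, Ideal.mem_comap]
    simp only [PrimeSpectrum.comap_asIdeal, Ideal.mem_comap]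
    show a' ∈ Ideal.comap g q'.asIdeal ↔ _
    rw [Ideal.mem_comap]
    have hga : g a' = f b := hx.symm
    rw [hga, hb, Ideal.mem_map_iff_of_surjective pr₁ hsurj]
    constructor
    · rintro ⟨y, hy, hyb⟩
      have hy1 : (y : B × A').1 = b := hyb
      have hdiff : a' - (y : B × A').2 ∈ J' := by
        rw [← Ideal.Quotient.eq_zero_iff_mem]
        show g (a' - (y : B × A').2) = 0
        have h1 : g (y : B × A').2 = f (y : B × A').1 := y.2.symm
        rw [map_sub, h1, hga, hy1, sub_self]
      have hxy : (⟨(b, a'), hx⟩ : fiberProd f g)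
          = y + ⟨((0 : B), a' - (y : B × A').2), hmemK _ hdiff⟩ := by
        apply Subtype.ext
        ext <;> simp [hy1]
      rw [hxy]
      exact P.asIdeal.add_mem hy (hK _ hdiff)
    · intro h
      exact ⟨⟨(b, a'), hx⟩, h, rfl⟩
  · -- Case: ∃ j ∈ J', (0, j) ∉ P.
    push_neg at hK
    obtain ⟨j, hj, hjP⟩ := hK
    have hja : ∀ a' : A', ((0 : B), j * a') ∈ fiberProd f g :=
      fun a' => hmemK _ (J'.mul_mem_right a' hj)
    set q : Ideal A' :=
      { carrier := {a' | (⟨((0 : B), j * a'), hja a'⟩ : fiberProd f g) ∈ P.asIdeal}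
        zero_mem' := by
          show (⟨((0 : B), j * 0), hja 0⟩ : fiberProd f g) ∈ P.asIdeal
          have h0 : (⟨((0 : B), j * 0), hja 0⟩ : fiberProd f g) = 0 := by
            apply Subtype.ext; simp
          rw [h0]; exact P.asIdeal.zero_mem
        add_mem' := by
          intro a b ha hb
          show (⟨((0 : B), j * (a + b)), hja _⟩ : fiberProd f g) ∈ P.asIdeal
          have heq : (⟨((0 : B), j * (a + b)), hja _⟩ : fiberProd f g)
              = ⟨((0 : B), j * a), hja a⟩ + ⟨((0 : B), j * b), hja b⟩ := by
            apply Subtype.ext; ext <;> simp [mul_add]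
          rw [heq]
          exact P.asIdeal.add_mem ha hb
        smul_mem' := by
          intro c a ha
          show (⟨((0 : B), j * (c * a)), hja _⟩ : fiberProd f g) ∈ P.asIdeal
          have ha' : (⟨((0 : B), j * a), hja a⟩ : fiberProd f g) ∈ P.asIdeal := ha
          have h1 : (⟨((0 : B), j * c), hja c⟩ : fiberProd f g) * ⟨((0 : B), j * a), hja a⟩
              = (⟨((0 : B), j), hmemK j hj⟩ : fiberProd f g)
                * ⟨((0 : B), j * (c * a)), hja _⟩ := by
            apply Subtype.ext; ext <;> simp <;> ring
          have h2 : (⟨((0 : B), j), hmemK j hj⟩ : fiberProd f g)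
              * ⟨((0 : B), j * (c * a)), hja _⟩ ∈ P.asIdeal := by
            rw [← h1]; exact P.asIdeal.mul_mem_left _ ha'
          rcases P.isPrime.mem_or_mem h2 with h | h
          · exact absurd h hjP
          · exact h } with hqdef
    have hqprime : q.IsPrime := by
      constructor
      · intro h
        rw [Ideal.eq_top_iff_one] at h
        have h1 : (⟨((0 : B), j * 1), hja 1⟩ : fiberProd f g) ∈ P.asIdeal := h
        have h2 : (⟨((0 : B), j * 1), hja 1⟩ : fiberProd f g)
            = ⟨((0 : B), j), hmemK j hj⟩ := by
          apply Subtype.ext; ext <;> simp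
        rw [h2] at h1
        exact hjP h1
      · intro a b hab
        have hab' : (⟨((0 : B), j * (a * b)), hja _⟩ : fiberProd f g) ∈ P.asIdeal := hab
        have h1 : (⟨((0 : B), j * a), hja a⟩ : fiberProd f g) * ⟨((0 : B), j * b), hja b⟩
            = (⟨((0 : B), j), hmemK j hj⟩ : fiberProd f g)
              * ⟨((0 : B), j * (a * b)), hja _⟩ := by
          apply Subtype.ext; ext <;> simp <;> ring
        have h2 : (⟨((0 : B), j * a), hja a⟩ : fiberProd f g)
            * ⟨((0 : B), j * b), hja b⟩ ∈ P.asIdeal := by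
          rw [h1]; exact P.asIdeal.mul_mem_left _ hab'
        exact P.isPrime.mem_or_mem h2
    refine ⟨⟨q, hqprime⟩, ?_⟩
    ext x
    obtain ⟨⟨b, a'⟩, hx⟩ := x
    simp only [PrimeSpectrum.comap_asIdeal, Ideal.mem_comap]
    show a' ∈ q ↔ _
    have hmul : (⟨((0 : B), j), hmemK j hj⟩ : fiberProd f g) * ⟨(b, a'), hx⟩
        = ⟨((0 : B), j * a'), hja a'⟩ := by
      apply Subtype.ext; ext <;> simp
    constructor
    · intro h
      have h1 : (⟨((0 : B), j), hmemK j hj⟩ : fiberProd f g) * ⟨(b, a'), hx⟩ ∈ P.asIdeal := by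
        rw [hmul]; exact h
      rcases P.isPrime.mem_or_mem h1 with h | h
      · exact absurd h hjP
      · exact h
    · intro h
      show (⟨((0 : B), j * a'), hja a'⟩ : fiberProd f g) ∈ P.asIdeal
      rw [← hmul]
      exact P.asIdeal.mul_mem_left _ h
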